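/- Let λ : Ω → (0,∞) and w : Ω → (0,∞) with E(x,y) ⊆ Ω for all (x,y) ∈ Ω, and let M > 0 satisfy |λ(p) − λ(p')| ≤ M·‖p − p'‖_∞ for all p, p' ∈ Ω, λ ≤ M on Ω, and w ≤ M on Ω, with w measurable. Let p, p' ∈ Ω satisfy ‖p − p'‖_∞ < (λ(p) + λ(p'))/2. Then ∫_Ω |χ_{E(p)} − χ_{E(p')}|² w dA ≤ 2M²(M + 2)·‖p − p'‖_∞. -/

import Mathlib

/-!
On `Ω` the integrand equals `w ≤ M` on the symmetric difference of the two squares and vanishes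
elsewhere, so the integral is at most `M` times the area of that symmetric difference. The
symmetric difference of two boxes is covered by strips whose lengths are side lengths `≤ M` and
whose widths are the displacements of the corresponding edges; by the Lipschitz bound each edge
moves by at most `‖p - p'‖ + |λ p - λ p'| / 2 ≤ (1 + M / 2) ‖p - p'‖`.
-/

open MeasureTheory Real

noncomputable section

/-- The open first quadrant. -/
def Omega : Set (ℝ × ℝ) := {p | 0 < p.1 ∧ 0 < p.2}

/-- The closed axis-aligned square centered at `p` with side length `l`. -/
def sqr (l : ℝ) (p : ℝ × ℝ) : Set (ℝ × ℝ) :=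
  Set.Icc (p.1 - l / 2) (p.1 + l / 2) ×ˢ Set.Icc (p.2 - l / 2) (p.2 + l / 2)

/-- The square `E(p)` associated to a length function `lam`. -/
def sqE (lam : ℝ × ℝ → ℝ) (p : ℝ × ℝ) : Set (ℝ × ℝ) := sqr (lam p) p

/-- The persistence surface of the diagram `D`. -/
def surf (f lam : ℝ × ℝ → ℝ) {N : ℕ} (D : Fin N → ℝ × ℝ) (z : ℝ × ℝ) : ℝ :=
  ∑ n, f (D n) * Set.indicator (sqE lam (D n)) 1 z

/-- The identification `ρ(D)` of a persistence diagram as a function. -/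
def rho (lam : ℝ × ℝ → ℝ) {N : ℕ} (D : Fin N → ℝ × ℝ) (z : ℝ × ℝ) : ℝ :=
  ∑ n, Set.indicator (sqE lam (D n)) 1 z

/-- The `L²(w dA)` norm, the integral taken over `Omega`. -/
def l2norm (w g : ℝ × ℝ → ℝ) : ℝ :=
  Real.sqrt (∫ z in Omega, (g z) ^ 2 * w z)

/-- The `p`-Wasserstein distance between two `N`-point diagrams (sup-norm ground metric). -/
def Wp (p : ℝ) {N : ℕ} (D D' : Fin N → ℝ × ℝ) : ℝ :=
  ⨅ σ : Equiv.Perm (Fin N), (∑ n, ‖D n - D' (σ n)‖ ^ p) ^ (1 / p)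

/-- The `1/2`-Wasserstein distance (no outer power). -/
def Whalf {N : ℕ} (D D' : Fin N → ℝ × ℝ) : ℝ :=
  ⨅ σ : Equiv.Perm (Fin N), ∑ n, ‖D n - D' (σ n)‖ ^ ((1 : ℝ) / 2)

/-- The `1`-Wasserstein distance. -/
def W1 {N : ℕ} (D D' : Fin N → ℝ × ℝ) : ℝ :=
  ⨅ σ : Equiv.Perm (Fin N), ∑ n, ‖D n - D' (σ n)‖

/-- The persistence image value `I_S(D) = ∫_S f̃ρ(D) w dA`. -/
def Ipix (f lam w : ℝ × ℝ → ℝ) {N : ℕ} (D : Fin N → ℝ × ℝ) (S : Set (ℝ × ℝ)) : ℝ :=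
  ∫ z in S, surf f lam D z * w z

/-- `‖f‖_∞ = sup_Ω |f|`. -/
def supAbs (f : ℝ × ℝ → ℝ) : ℝ := ⨆ p : Omega, |f p.val|

/-- `‖λ‖_∞ = sup_Ω λ`. -/
def supLam (lam : ℝ × ℝ → ℝ) : ℝ := ⨆ p : Omega, lam p.val

open Set
open scoped symmDiff ENNReal

lemma sq_indicator_one_sub_indicator_one {α : Type*} (s t : Set α) (z : α) :
    (s.indicator (1 : α → ℝ) z - t.indicator 1 z) ^ 2 = (s ∆ t).indicator 1 z := by
  by_cases hs : z ∈ s <;> by_cases ht : z ∈ t <;> simp [hs, ht, mem_symmDiff]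

lemma sq_indicator_one_sub_indicator_one_mul_le {α : Type*} {s t : Set α} {w : α → ℝ} {M : ℝ}
    {z : α} (hw : w z ≤ M) :
    (s.indicator (1 : α → ℝ) z - t.indicator 1 z) ^ 2 * w z ≤
      (s ∆ t).indicator (fun _ => M) z := by
  rw [sq_indicator_one_sub_indicator_one]
  by_cases hz : z ∈ s ∆ t <;> simp [hz, hw]

lemma setIntegral_sq_indicator_sub_mul_le {α : Type*} [MeasurableSpace α] {μ : Measure α}
    {Ω s t : Set α} {w : α → ℝ} {M : ℝ} (hM : 0 ≤ M) (hΩ : MeasurableSet Ω)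
    (hw₀ : ∀ z ∈ Ω, 0 ≤ w z) (hwM : ∀ z ∈ Ω, w z ≤ M) (hs : MeasurableSet s)
    (ht : MeasurableSet t) (hst : μ (s ∆ t) ≠ ∞) :
    ∫ z in Ω, (s.indicator (1 : α → ℝ) z - t.indicator 1 z) ^ 2 * w z ∂μ ≤
      M * μ.real (s ∆ t) := by
  have hint : Integrable ((s ∆ t).indicator fun _ => M) μ :=
    (integrable_indicator_iff (hs.symmDiff ht)).2 (integrableOn_const hst)
  calc ∫ z in Ω, (s.indicator (1 : α → ℝ) z - t.indicator 1 z) ^ 2 * w z ∂μ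
      ≤ ∫ z in Ω, (s ∆ t).indicator (fun _ => M) z ∂μ :=
        integral_mono_of_nonneg
          (ae_restrict_of_forall_mem hΩ fun z hz => mul_nonneg (sq_nonneg _) (hw₀ z hz))
          hint.integrableOn
          (ae_restrict_of_forall_mem hΩ fun z hz =>
            sq_indicator_one_sub_indicator_one_mul_le (hwM z hz))
    _ ≤ ∫ z, (s ∆ t).indicator (fun _ => M) z ∂μ :=
        setIntegral_le_integral hint (ae_of_all _ fun z => indicator_nonneg (fun _ _ => hM) z)
    _ = M * μ.real (s ∆ t) := by
        rw [integral_indicator_const M (hs.symmDiff ht), smul_eq_mul, mul_comm]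

lemma Icc_symmDiff_Icc_subset (a b c d : ℝ) :
    Icc a b ∆ Icc c d ⊆ uIcc a c ∪ uIcc b d := by
  intro z hz
  simp only [mem_symmDiff, mem_Icc, mem_union, mem_uIcc] at hz ⊢
  grind

lemma volume_Icc_symmDiff_Icc_le (a b c d : ℝ) :
    volume (Icc a b ∆ Icc c d) ≤ ENNReal.ofReal (|a - c| + |b - d|) :=
  calc volume (Icc a b ∆ Icc c d) ≤ volume (uIcc a c ∪ uIcc b d) :=
        measure_mono (Icc_symmDiff_Icc_subset a b c d)
    _ ≤ volume (uIcc a c) + volume (uIcc b d) := measure_union_le _ _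
    _ = ENNReal.ofReal (|a - c| + |b - d|) := by
      rw [Real.volume_interval, Real.volume_interval, abs_sub_comm c, abs_sub_comm d,
        ENNReal.ofReal_add (abs_nonneg _) (abs_nonneg _)]

lemma abs_sub_add_abs_sub_centered_le (x x' l l' : ℝ) :
    |(x - l / 2) - (x' - l' / 2)| + |(x + l / 2) - (x' + l' / 2)| ≤
      2 * |x - x'| + |l - l'| := by
  have h₁ : |(x - l / 2) - (x' - l' / 2)| ≤ |x - x'| + |l - l'| / 2 :=
    calc |(x - l / 2) - (x' - l' / 2)| = |(x - x') + -((l - l') / 2)| := by ring_nf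
      _ ≤ |x - x'| + |-((l - l') / 2)| := abs_add_le _ _
      _ = |x - x'| + |l - l'| / 2 := by rw [abs_neg, abs_div, abs_two]
  have h₂ : |(x + l / 2) - (x' + l' / 2)| ≤ |x - x'| + |l - l'| / 2 :=
    calc |(x + l / 2) - (x' + l' / 2)| = |(x - x') + (l - l') / 2| := by ring_nf
      _ ≤ |x - x'| + |(l - l') / 2| := abs_add_le _ _
      _ = |x - x'| + |l - l'| / 2 := by rw [abs_div, abs_two]
  linarith

section Prod

variable {α β : Type*} [MeasurableSpace α] [MeasurableSpace β] {μ : Measure α} {ν : Measure β}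
  [SFinite ν]

lemma measure_prod_diff_prod_le (s s' : Set α) (t t' : Set β) :
    μ.prod ν (s ×ˢ t \ s' ×ˢ t') ≤ μ s * ν (t \ t') + μ (s \ s') * ν t := by
  rw [prod_sdiff_prod, ← Measure.prod_prod, ← Measure.prod_prod]
  exact measure_union_le _ _

lemma measure_prod_symmDiff_prod_le {s s' : Set α} {t t' : Set β} (hs : MeasurableSet s)
    (hs' : MeasurableSet s') (ht : MeasurableSet t) (ht' : MeasurableSet t') {C : ℝ≥0∞}
    (hμs : μ s ≤ C) (hμs' : μ s' ≤ C) (hνt : ν t ≤ C) (hνt' : ν t' ≤ C) :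
    μ.prod ν ((s ×ˢ t) ∆ (s' ×ˢ t')) ≤ C * (μ (s ∆ s') + ν (t ∆ t')) := by
  rw [measure_symmDiff_eq hs.nullMeasurableSet hs'.nullMeasurableSet,
    measure_symmDiff_eq ht.nullMeasurableSet ht'.nullMeasurableSet]
  calc μ.prod ν ((s ×ˢ t) ∆ (s' ×ˢ t'))
      ≤ μ.prod ν (s ×ˢ t \ s' ×ˢ t') + μ.prod ν (s' ×ˢ t' \ s ×ˢ t) := measure_union_le _ _
    _ ≤ (μ s * ν (t \ t') + μ (s \ s') * ν t) + (μ s' * ν (t' \ t) + μ (s' \ s) * ν t') :=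
      add_le_add (measure_prod_diff_prod_le _ _ _ _) (measure_prod_diff_prod_le _ _ _ _)
    _ ≤ (C * ν (t \ t') + μ (s \ s') * C) + (C * ν (t' \ t) + μ (s' \ s) * C) := by gcongr
    _ = C * (μ (s \ s') + μ (s' \ s) + (ν (t \ t') + ν (t' \ t))) := by ring

end Prod

lemma measurableSet_sqr (l : ℝ) (p : ℝ × ℝ) : MeasurableSet (sqr l p) :=
  measurableSet_Icc.prod measurableSet_Icc

lemma volume_sqr_symmDiff_sqr_le {l l' C : ℝ} (hl : 0 ≤ l) (hlC : l ≤ C) (hl'C : l' ≤ C)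
    (p p' : ℝ × ℝ) :
    volume (sqr l p ∆ sqr l' p') ≤ ENNReal.ofReal (C * (4 * ‖p - p'‖ + 2 * |l - l'|)) := by
  have hC : 0 ≤ C := hl.trans hlC
  have side (x : ℝ) {m : ℝ} (hm : m ≤ C) :
      volume (Icc (x - m / 2) (x + m / 2)) ≤ ENNReal.ofReal C := by
    rw [Real.volume_Icc]
    exact ENNReal.ofReal_le_ofReal (by linarith)
  have edge (x x' : ℝ) :
      volume (Icc (x - l / 2) (x + l / 2) ∆ Icc (x' - l' / 2) (x' + l' / 2)) ≤
        ENNReal.ofReal (2 * |x - x'| + |l - l'|) :=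
    (volume_Icc_symmDiff_Icc_le _ _ _ _).trans
      (ENNReal.ofReal_le_ofReal (abs_sub_add_abs_sub_centered_le _ _ _ _))
  have h₁ : |p.1 - p'.1| ≤ ‖p - p'‖ := by simpa using norm_fst_le (p - p')
  have h₂ : |p.2 - p'.2| ≤ ‖p - p'‖ := by simpa using norm_snd_le (p - p')
  calc volume (sqr l p ∆ sqr l' p')
      ≤ ENNReal.ofReal C *
          (volume (Icc (p.1 - l / 2) (p.1 + l / 2) ∆ Icc (p'.1 - l' / 2) (p'.1 + l' / 2)) +
            volume (Icc (p.2 - l / 2) (p.2 + l / 2) ∆ Icc (p'.2 - l' / 2) (p'.2 + l' / 2))) := by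
        rw [Measure.volume_eq_prod]
        exact measure_prod_symmDiff_prod_le measurableSet_Icc measurableSet_Icc measurableSet_Icc
          measurableSet_Icc (side _ hlC) (side _ hl'C) (side _ hlC) (side _ hl'C)
    _ ≤ ENNReal.ofReal C * (ENNReal.ofReal (2 * |p.1 - p'.1| + |l - l'|) +
          ENNReal.ofReal (2 * |p.2 - p'.2| + |l - l'|)) := by
        gcongr <;> exact edge _ _
    _ ≤ ENNReal.ofReal (C * (4 * ‖p - p'‖ + 2 * |l - l'|)) := by
        rw [← ENNReal.ofReal_add (by positivity) (by positivity), ← ENNReal.ofReal_mul hC]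
        exact ENNReal.ofReal_le_ofReal (mul_le_mul_of_nonneg_left (by linarith) hC)

lemma measurableSet_Omega : MeasurableSet Omega :=
  (measurableSet_Ioi.prod measurableSet_Ioi : MeasurableSet (Ioi (0 : ℝ) ×ˢ Ioi (0 : ℝ)))

theorem stmt15_general (lam w : ℝ × ℝ → ℝ) (M : ℝ) (hM : 0 < M)
    (hlam0 : ∀ q ∈ Omega, 0 < lam q) (hw0 : ∀ q ∈ Omega, 0 < w q)
    (hlip : ∀ q ∈ Omega, ∀ q' ∈ Omega, |lam q - lam q'| ≤ M * ‖q - q'‖)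
    (hlamb : ∀ q ∈ Omega, lam q ≤ M) (hwb : ∀ q ∈ Omega, w q ≤ M)
    (p p' : ℝ × ℝ) (hp : p ∈ Omega) (hp' : p' ∈ Omega) :
    ∫ z in Omega, (Set.indicator (sqE lam p) 1 z - Set.indicator (sqE lam p') 1 z) ^ 2 * w z ≤
      2 * M ^ 2 * (M + 2) * ‖p - p'‖ := by
  have hvol := volume_sqr_symmDiff_sqr_le (hlam0 p hp).le (hlamb p hp) (hlamb p' hp') p p'
  calc ∫ z in Omega, (Set.indicator (sqE lam p) 1 z - Set.indicator (sqE lam p') 1 z) ^ 2 * w z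
      ≤ M * volume.real (sqE lam p ∆ sqE lam p') :=
        setIntegral_sq_indicator_sub_mul_le hM.le measurableSet_Omega (fun z hz => (hw0 z hz).le)
          hwb (measurableSet_sqr _ _) (measurableSet_sqr _ _)
          (ne_top_of_le_ne_top ENNReal.ofReal_ne_top hvol)
    _ ≤ M * (M * (4 * ‖p - p'‖ + 2 * |lam p - lam p'|)) := by
        gcongr
        exact ENNReal.toReal_le_of_le_ofReal (by positivity) hvol
    _ ≤ M * (M * (4 * ‖p - p'‖ + 2 * (M * ‖p - p'‖))) := by
        gcongr
        exact hlip p hp p' hp'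
    _ = 2 * M ^ 2 * (M + 2) * ‖p - p'‖ := by ring

/-- weighted `L²` estimate on the difference of indicators of two
overlapping squares. -/
theorem stmt15 (lam w : ℝ × ℝ → ℝ) (M : ℝ) (hM : 0 < M)
    (hlam0 : ∀ q ∈ Omega, 0 < lam q) (hw0 : ∀ q ∈ Omega, 0 < w q)
    (hE : ∀ q ∈ Omega, sqE lam q ⊆ Omega)
    (hlip : ∀ q ∈ Omega, ∀ q' ∈ Omega, |lam q - lam q'| ≤ M * ‖q - q'‖)
    (hlamb : ∀ q ∈ Omega, lam q ≤ M) (hwb : ∀ q ∈ Omega, w q ≤ M)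
    (p p' : ℝ × ℝ) (hp : p ∈ Omega) (hp' : p' ∈ Omega)
    (h : ‖p - p'‖ < (lam p + lam p') / 2) :
    ∫ z in Omega, (Set.indicator (sqE lam p) 1 z - Set.indicator (sqE lam p') 1 z) ^ 2 * w z ≤
      2 * M ^ 2 * (M + 2) * ‖p - p'‖ :=
  stmt15_general lam w M hM hlam0 hw0 hlip hlamb hwb p p' hp hp'
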